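/- arXiv:2405.18775 — 5 statements merged into one kernel-verified Lean document; each statement's English description precedes it below -/
import Mathlib

section
/- Define the triangular function ∇ : ℝ → ℝ by ∇(t) = t for 0 < t ≤ 1, ∇(t) = 2 − t for 1 < t ≤ 2, and ∇(t) = 0 otherwise. For a positive integer η, a real number c with 0 < c < 1, and positive integers n, m, define A(n,m) := (1/η) ∫_0^η ∇(n − 1 − t − c) · ∇(m − 1 − t − c) dt. Then for every positive integer η, A(2,3) = A(3,2) = (1 − 3c² + 2c³) / (6η). (Equation (22): the (2,3) entry of the averaged timing-offset outer product.) -/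
/-- The triangular pulse: ∇(t) = t for 0 < t ≤ 1, 2 − t for 1 < t ≤ 2, 0 otherwise. -/
noncomputable def tri (t : ℝ) : ℝ :=
  if 0 < t ∧ t ≤ 1 then t else if 1 < t ∧ t ≤ 2 then 2 - t else 0

/-- The (n,m) entry of the averaged timing-offset outer product E[U(Δτ)U(Δτ)ᴴ], when the
normalized timing offset is uniform on [0,η] and the normalized LoS path delay is c. -/
noncomputable def Aent (η : ℕ) (c : ℝ) (n m : ℕ) : ℝ :=
  (1 / (η : ℝ)) * ∫ t in (0:ℝ)..(η : ℝ), tri ((n : ℝ) - 1 - t - c) * tri ((m : ℝ) - 1 - t - c)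

open intervalIntegral MeasureTheory

lemma key (η : ℕ) (hη : 0 < η) (c : ℝ) (hc0 : 0 < c) (hc1 : c < 1) :
    ∫ t in (0:ℝ)..(η : ℝ), tri (1 - t - c) * tri (2 - t - c)
      = (1 - 3 * c ^ 2 + 2 * c ^ 3) / 6 := by
  have hη1 : (1:ℝ) ≤ (η : ℝ) := by exact_mod_cast hη
  have hb0 : (0:ℝ) ≤ 1 - c := by linarith
  have hbη : (1 - c) ≤ (η : ℝ) := by linarith
  have eq1 : Set.EqOn (fun t => tri (1 - t - c) * tri (2 - t - c))
      (fun t => (1 - t - c) * (t + c)) (Set.uIcc 0 (1 - c)) := by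
    intro t ht
    rw [Set.uIcc_of_le hb0] at ht
    obtain ⟨ht0, ht1⟩ := ht
    rcases eq_or_lt_of_le ht1 with h | h
    · have h0 : (1:ℝ) - t - c = 0 := by linarith
      have e0 : tri 0 = 0 := by simp [tri]
      simp only [h0, e0, zero_mul]
    · have e1 : tri (1 - t - c) = 1 - t - c := by
        simp only [tri]; rw [if_pos ⟨by linarith, by linarith⟩]
      have e2 : tri (2 - t - c) = t + c := by
        simp only [tri]
        rw [if_neg (by rintro ⟨-, hh⟩; linarith), if_pos ⟨by linarith, by linarith⟩]
        ring
      simp only [e1, e2]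
  have eq2 : Set.EqOn (fun t => tri (1 - t - c) * tri (2 - t - c))
      (fun _ => (0:ℝ)) (Set.uIcc (1 - c) (η : ℝ)) := by
    intro t ht
    rw [Set.uIcc_of_le hbη] at ht
    obtain ⟨ht0, ht1⟩ := ht
    have e1 : tri (1 - t - c) = 0 := by
      simp only [tri]
      rw [if_neg (by rintro ⟨hh, -⟩; linarith), if_neg (by rintro ⟨hh, -⟩; linarith)]
    simp only [e1, zero_mul]
  have cont : Continuous (fun t : ℝ => (1 - t - c) * (t + c)) := by continuity
  have int1 : IntervalIntegrable (fun t => tri (1 - t - c) * tri (2 - t - c))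
      volume 0 (1 - c) := by
    rw [intervalIntegrable_iff]
    exact (cont.integrableOn_uIoc (a := 0) (b := 1 - c)).congr_fun
      (fun t ht => (eq1 (Set.uIoc_subset_uIcc ht)).symm) measurableSet_uIoc
  have int2 : IntervalIntegrable (fun t => tri (1 - t - c) * tri (2 - t - c))
      volume (1 - c) (η : ℝ) := by
    rw [intervalIntegrable_iff]
    exact (integrableOn_const measure_Ioc_lt_top.ne).congr_fun
      (fun t ht => (eq2 (Set.uIoc_subset_uIcc ht)).symm) measurableSet_uIoc
  have hF : ∀ x : ℝ, HasDerivAt (fun t : ℝ => (c - c ^ 2) * t + (1 - 2 * c) * t ^ 2 / 2 - t ^ 3 / 3)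
      ((1 - x - c) * (x + c)) x := by
    intro x
    have h1 := (hasDerivAt_id x).const_mul (c - c ^ 2)
    have h2 := ((hasDerivAt_pow 2 x).const_mul (1 - 2 * c)).div_const 2
    have h3 := (hasDerivAt_pow 3 x).div_const 3
    have h := (h1.add h2).sub h3
    refine h.congr_deriv ?_
    push_cast
    ring
  have hpoly : ∫ t in (0:ℝ)..(1 - c), (1 - t - c) * (t + c)
      = (1 - 3 * c ^ 2 + 2 * c ^ 3) / 6 := by
    rw [intervalIntegral.integral_eq_sub_of_hasDerivAt (fun x _ => hF x)
      (cont.intervalIntegrable _ _)]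
    ring
  rw [← integral_add_adjacent_intervals int1 int2,
    intervalIntegral.integral_congr eq1, intervalIntegral.integral_congr eq2,
    intervalIntegral.integral_const, hpoly]
  simp


/-- Equation (22): the (2,3) and (3,2) entries. -/
theorem Aent_two_three (η : ℕ) (hη : 0 < η) (c : ℝ) (hc0 : 0 < c) (hc1 : c < 1) :
    Aent η c 2 3 = (1 - 3 * c ^ 2 + 2 * c ^ 3) / (6 * (η : ℝ)) ∧
    Aent η c 3 2 = (1 - 3 * c ^ 2 + 2 * c ^ 3) / (6 * (η : ℝ)) := by
  have hne : (η : ℝ) ≠ 0 := Nat.cast_ne_zero.mpr hη.ne'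
  have h1 : (∫ t in (0:ℝ)..(η : ℝ), tri ((2:ℕ) - 1 - t - c) * tri ((3:ℕ) - 1 - t - c))
      = (1 - 3 * c ^ 2 + 2 * c ^ 3) / 6 := by
    rw [intervalIntegral.integral_congr
      (g := fun t => tri (1 - t - c) * tri (2 - t - c)) (fun t _ => by norm_num)]
    exact key η hη c hc0 hc1
  have h2 : (∫ t in (0:ℝ)..(η : ℝ), tri ((3:ℕ) - 1 - t - c) * tri ((2:ℕ) - 1 - t - c))
      = (1 - 3 * c ^ 2 + 2 * c ^ 3) / 6 := by
    rw [intervalIntegral.integral_congr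
      (g := fun t => tri (1 - t - c) * tri (2 - t - c)) (fun t _ => by norm_num [mul_comm])]
    exact key η hη c hc0 hc1
  push_cast at h1 h2
  constructor <;> (unfold Aent; push_cast) <;> [rw [h1]; rw [h2]] <;> ring
end

section
/- Define the triangular function ∇ : ℝ → ℝ by ∇(t) = t for 0 < t ≤ 1, ∇(t) = 2 − t for 1 < t ≤ 2, and ∇(t) = 0 otherwise. For a positive integer η, a real number c with 0 < c < 1, and positive integers n, m, define A(n,m) := (1/η) ∫_0^η ∇(n − 1 − t − c) · ∇(m − 1 − t − c) dt. Then for every integer η ≥ 2, A(3,3) = (2 − c³) / (3η). (Equation (23), second part: the (3,3) entry of the averaged timing-offset outer product, in the case η > 1.) -/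
lemma tri_eq_on {f g : ℝ → ℝ} (a b : ℝ) (hg : Continuous g)
    (h : Set.EqOn f g (Set.uIcc a b)) :
    IntervalIntegrable f MeasureTheory.volume a b ∧
      (∫ t in a..b, f t) = ∫ t in a..b, g t := by
  refine ⟨(hg.intervalIntegrable a b).congr ?_, intervalIntegral.integral_congr h⟩
  exact fun x hx => (h (Set.uIoc_subset_uIcc hx)).symm

/-- Equation (23), second part: the (3,3) entry, in the case η > 1. -/
theorem Aent_three_three (η : ℕ) (hη : 2 ≤ η) (c : ℝ) (hc0 : 0 < c) (hc1 : c < 1) :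
    Aent η c 3 3 = (2 - c ^ 3) / (3 * (η : ℝ)) := by
  have hηR : (2:ℝ) ≤ (η : ℝ) := by exact_mod_cast hη
  set f : ℝ → ℝ := fun t => tri ((3:ℝ) - 1 - t - c) * tri ((3:ℝ) - 1 - t - c) with hf
  have h1le : (0:ℝ) ≤ 1 - c := by linarith
  have h12 : (1:ℝ) - c ≤ 2 - c := by linarith
  have h2η : (2:ℝ) - c ≤ η := by linarith
  -- piece 1: on [0, 1-c], f t = (t+c)^2
  have e1 : Set.EqOn f (fun t => (t + c) ^ 2) (Set.uIcc 0 (1 - c)) := by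
    intro t ht
    rw [Set.uIcc_of_le h1le] at ht
    obtain ⟨ht0, ht1⟩ := ht
    have heq : tri ((3:ℝ) - 1 - t - c) = t + c := by
      rcases eq_or_lt_of_le ht1 with h | h
      · have : (3:ℝ) - 1 - t - c = 1 := by rw [h]; ring
        rw [this, tri]; norm_num; linarith
      · rw [tri, if_neg, if_pos]
        · ring
        · constructor <;> linarith
        · rintro ⟨-, h2⟩; linarith
    simp only [hf, heq]; ring
  have p1 := tri_eq_on 0 (1 - c) (by continuity) e1
  -- piece 2: on [1-c, 2-c], f t = (2-t-c)^2
  have e2 : Set.EqOn f (fun t => (2 - t - c) ^ 2) (Set.uIcc (1 - c) (2 - c)) := by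
    intro t ht
    rw [Set.uIcc_of_le h12] at ht
    obtain ⟨ht0, ht1⟩ := ht
    have heq : tri ((3:ℝ) - 1 - t - c) = 2 - t - c := by
      rcases eq_or_lt_of_le ht1 with h | h
      · have : (3:ℝ) - 1 - t - c = 0 := by rw [h]; ring
        rw [this, tri]; norm_num; linarith
      · rw [tri, if_pos]
        · ring
        · constructor <;> linarith
    simp only [hf, heq]; ring
  have p2 := tri_eq_on (1 - c) (2 - c) (by continuity) e2
  -- piece 3: on [2-c, η], f t = 0
  have e3 : Set.EqOn f (fun _ => (0:ℝ)) (Set.uIcc (2 - c) η) := by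
    intro t ht
    rw [Set.uIcc_of_le h2η] at ht
    obtain ⟨ht0, ht1⟩ := ht
    have heq : tri ((3:ℝ) - 1 - t - c) = 0 := by
      rw [tri, if_neg, if_neg]
      · rintro ⟨h1, -⟩; linarith
      · rintro ⟨h1, -⟩; linarith
    simp only [hf, heq]; ring
  have p3 := tri_eq_on (2 - c) η (by continuity) e3
  have hsplit : (∫ t in (0:ℝ)..(η:ℝ), f t) =
      (∫ t in (0:ℝ)..(1 - c), f t) + (∫ t in (1 - c)..(2 - c), f t) +
        (∫ t in (2 - c)..(η:ℝ), f t) := by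
    rw [intervalIntegral.integral_add_adjacent_intervals p1.1 p2.1,
      intervalIntegral.integral_add_adjacent_intervals (p1.1.trans p2.1) p3.1]
  have i1 : (∫ t in (0:ℝ)..(1 - c), (t + c) ^ 2) = (1 - c ^ 3) / 3 := by
    rw [intervalIntegral.integral_comp_add_right (fun x => x ^ 2) c,
      integral_pow]
    norm_num
  have i2 : (∫ t in (1 - c)..(2 - c), (2 - t - c) ^ 2) = 1 / 3 := by
    have : (∫ t in (1 - c)..(2 - c), (2 - t - c) ^ 2) =
        ∫ t in (1 - c)..(2 - c), (fun x => x ^ 2) (t - (2 - c)) := by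
      apply intervalIntegral.integral_congr
      intro t _; simp; ring
    rw [this, intervalIntegral.integral_comp_sub_right (fun x => x ^ 2) (2 - c),
      integral_pow]
    norm_num
  have key : (∫ t in (0:ℝ)..(η:ℝ), f t) = (2 - c ^ 3) / 3 := by
    rw [hsplit, p1.2, p2.2, p3.2, i1, i2, intervalIntegral.integral_zero]
    ring
  have hη0 : (η:ℝ) ≠ 0 := by positivity
  rw [Aent]
  show (1 / (η : ℝ)) * (∫ t in (0:ℝ)..(η:ℝ), f t) = _
  rw [key, one_div, inv_mul_eq_div, div_div]
end

section
/- Define the triangular function ∇ : ℝ → ℝ by ∇(t) = t for 0 < t ≤ 1, ∇(t) = 2 − t for 1 < t ≤ 2, and ∇(t) = 0 otherwise. For a positive integer η, a real number c with 0 < c < 1, and positive integers n, m, define A(n,m) := (1/η) ∫_0^η ∇(n − 1 − t − c) · ∇(m − 1 − t − c) dt. Then for every integer η ≥ 2 and every integer υ with 2 ≤ υ ≤ η, A(υ+1, υ+2) = A(υ+2, υ+1) = 1 / (6η). (Equation (23), third part: the interior off-diagonal entries of the averaged timing-offset outer product.) -/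
lemma tri_measurable : Measurable tri := by
  unfold tri
  refine Measurable.ite ?_ measurable_id (Measurable.ite ?_ (by fun_prop) measurable_const)
  · exact (measurableSet_lt measurable_const measurable_id).inter
      (measurableSet_le measurable_id measurable_const)
  · exact (measurableSet_lt measurable_const measurable_id).inter
      (measurableSet_le measurable_id measurable_const)

lemma tri_abs_le (t : ℝ) : |tri t| ≤ 1 := by
  unfold tri
  split_ifs with h1 h2 <;> rw [abs_le] <;> constructor
  · linarith [h1.1]
  · exact h1.2
  · linarith [h2.2]
  · linarith [h2.1]
  · norm_num
  · norm_num

lemma tri_eq_low {s : ℝ} (h0 : 0 ≤ s) (h1 : s ≤ 1) : tri s = s := by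
  unfold tri
  split_ifs with ha hb
  · rfl
  · linarith [hb.1]
  · push_neg at ha
    rcases lt_or_eq_of_le h0 with h | h
    · exact absurd h1 (not_le.mpr (ha h))
    · exact h

lemma tri_eq_high {s : ℝ} (h0 : 1 ≤ s) (h1 : s ≤ 2) : tri s = 2 - s := by
  unfold tri
  split_ifs with ha hb
  · have : s = 1 := le_antisymm ha.2 h0
    rw [this]; norm_num
  · rfl
  · push_neg at hb
    exfalso
    rcases lt_or_eq_of_le h0 with h | h
    · exact absurd h1 (not_le.mpr (hb h))
    · exact ha ⟨by linarith, le_of_eq h.symm⟩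

lemma tri_eq_zero_of_nonpos {s : ℝ} (h : s ≤ 0) : tri s = 0 := by
  unfold tri
  split_ifs with ha hb
  · linarith [ha.1]
  · linarith [hb.1]
  · rfl

lemma tri_eq_zero_of_ge {s : ℝ} (h : 2 ≤ s) : tri s = 0 := by
  rcases eq_or_lt_of_le h with h | h
  · rw [← h, tri_eq_high (by norm_num) (by norm_num)]; norm_num
  · unfold tri
    split_ifs with ha hb
    · linarith [ha.2]
    · linarith [hb.2]
    · rfl

lemma tri_intInt (a b p q : ℝ) :
    IntervalIntegrable (fun t => tri (a - t) * tri (b - t)) MeasureTheory.volume p q := by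
  apply IntervalIntegrable.mono_fun (intervalIntegrable_const (c := (1:ℝ)))
  · exact ((tri_measurable.comp (measurable_const.sub measurable_id)).mul
      (tri_measurable.comp (measurable_const.sub measurable_id))).aestronglyMeasurable
  · filter_upwards with t
    have h1 := tri_abs_le (a - t)
    have h2 := tri_abs_le (b - t)
    simp only [Real.norm_eq_abs, abs_mul, norm_one]
    calc |tri (a - t)| * |tri (b - t)| ≤ 1 * 1 :=
      mul_le_mul h1 h2 (abs_nonneg _) zero_le_one
    _ = 1 := by ring

lemma key_integral (η : ℕ) (hη : 2 ≤ η) (c : ℝ) (hc0 : 0 < c) (hc1 : c < 1)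
    (υ : ℕ) (hυ1 : 2 ≤ υ) (hυ2 : υ ≤ η) :
    (∫ t in (0:ℝ)..(η : ℝ), tri ((υ : ℝ) - c - t) * tri ((υ : ℝ) - c + 1 - t)) = 1/6 := by
  set b : ℝ := (υ : ℝ) - c with hb
  have hυR : (2:ℝ) ≤ (υ : ℝ) := by exact_mod_cast hυ1
  have hηR : (υ : ℝ) ≤ (η : ℝ) := by exact_mod_cast hυ2
  have hb1 : 0 ≤ b - 1 := by simp only [hb]; linarith
  have hbη : b ≤ (η : ℝ) := by simp only [hb]; linarith
  have i1 := tri_intInt b (b+1) 0 (b-1)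
  have i2 := tri_intInt b (b+1) (b-1) b
  have i3 := tri_intInt b (b+1) b (η : ℝ)
  have split1 := intervalIntegral.integral_add_adjacent_intervals i1
    ((i2).trans i3)
  have split2 := intervalIntegral.integral_add_adjacent_intervals i2 i3
  have e1 : (∫ t in (0:ℝ)..(b-1), tri (b - t) * tri (b + 1 - t)) = 0 := by
    rw [intervalIntegral.integral_congr (g := fun _ => (0:ℝ))]
    · simp
    · intro t ht
      rw [Set.uIcc_of_le (by linarith)] at ht
      have h2 : 2 ≤ b + 1 - t := by linarith [ht.2]
      show tri (b - t) * tri (b + 1 - t) = 0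
      rw [tri_eq_zero_of_ge h2, mul_zero]
  have e3 : (∫ t in b..(η:ℝ), tri (b - t) * tri (b + 1 - t)) = 0 := by
    rw [intervalIntegral.integral_congr (g := fun _ => (0:ℝ))]
    · simp
    · intro t ht
      rw [Set.uIcc_of_le hbη] at ht
      have h2 : b - t ≤ 0 := by linarith [ht.1]
      show tri (b - t) * tri (b + 1 - t) = 0
      rw [tri_eq_zero_of_nonpos h2, zero_mul]
  have e2 : (∫ t in (b-1)..b, tri (b - t) * tri (b + 1 - t)) = 1/6 := by
    have hcg : (∫ t in (b-1)..b, tri (b - t) * tri (b + 1 - t))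
        = ∫ t in (b-1)..b, ((b - t) * (1 - (b - t))) := by
      apply intervalIntegral.integral_congr
      intro t ht
      rw [Set.uIcc_of_le (by linarith)] at ht
      have hs0 : 0 ≤ b - t := by linarith [ht.2]
      have hs1 : b - t ≤ 1 := by linarith [ht.1]
      show tri (b - t) * tri (b + 1 - t) = (b - t) * (1 - (b - t))
      rw [tri_eq_low hs0 hs1, tri_eq_high (by linarith) (by linarith)]
      ring
    rw [hcg]
    have hsub : (∫ t in (b-1)..b, ((b - t) * (1 - (b - t))))
        = ∫ u in (b - b)..(b - (b-1)), (u * (1 - u)) :=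
      intervalIntegral.integral_comp_sub_left (fun u => u * (1 - u)) b
    rw [hsub]
    norm_num
    have : (∫ u in (0:ℝ)..1, (u * (1 - u))) = ∫ u in (0:ℝ)..1, (u - u^2) := by
      apply intervalIntegral.integral_congr; intro u _; ring
    rw [this, intervalIntegral.integral_sub (intervalIntegral.intervalIntegrable_id)
      (intervalIntegral.intervalIntegrable_pow 2)]
    simp [integral_id, integral_pow]
    norm_num
  have hfun : (∫ t in (0:ℝ)..(η : ℝ), tri ((υ : ℝ) - c - t) * tri ((υ : ℝ) - c + 1 - t))
      = ∫ t in (0:ℝ)..(η : ℝ), tri (b - t) * tri ((b+1) - t) := by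
    apply intervalIntegral.integral_congr; intro t _
    simp only [hb]
  rw [hfun, ← split1, ← split2, e1, e2, e3]
  norm_num

/-- Equation (23), third part: the interior off-diagonal entries. -/
theorem Aent_interior_offdiag (η : ℕ) (hη : 2 ≤ η) (c : ℝ) (hc0 : 0 < c) (hc1 : c < 1)
    (υ : ℕ) (hυ1 : 2 ≤ υ) (hυ2 : υ ≤ η) :
    Aent η c (υ + 1) (υ + 2) = 1 / (6 * (η : ℝ)) ∧
    Aent η c (υ + 2) (υ + 1) = 1 / (6 * (η : ℝ)) := by
  have key := key_integral η hη c hc0 hc1 υ hυ1 hυ2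
  have hη0 : (η : ℝ) ≠ 0 := by positivity
  have cast1 : ∀ t : ℝ, ((υ + 1 : ℕ) : ℝ) - 1 - t - c = (υ : ℝ) - c - t := by
    intro t; push_cast; ring
  have cast2 : ∀ t : ℝ, ((υ + 2 : ℕ) : ℝ) - 1 - t - c = (υ : ℝ) - c + 1 - t := by
    intro t; push_cast; ring
  constructor
  · unfold Aent
    simp only [cast1, cast2]
    rw [key]
    field_simp
  · unfold Aent
    simp only [cast1, cast2]
    have : (∫ t in (0:ℝ)..(η : ℝ), tri ((υ : ℝ) - c + 1 - t) * tri ((υ : ℝ) - c - t))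
        = ∫ t in (0:ℝ)..(η : ℝ), tri ((υ : ℝ) - c - t) * tri ((υ : ℝ) - c + 1 - t) := by
      apply intervalIntegral.integral_congr; intro t _; ring
    rw [this, key]
    field_simp
end

section
/- Define the triangular function ∇ : ℝ → ℝ by ∇(t) = t for 0 < t ≤ 1, ∇(t) = 2 − t for 1 < t ≤ 2, and ∇(t) = 0 otherwise. For a positive integer η, a real number c with 0 < c < 1, and positive integers n, m, define A(n,m) := (1/η) ∫_0^η ∇(n − 1 − t − c) · ∇(m − 1 − t − c) dt. Then for every integer η ≥ 2, A(η+2, η+2) = (2 − (1 − c)³) / (3η). (Equation (26), first part: the boundary diagonal entry of the averaged timing-offset outer product, in the case η > 1.) -/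
lemma tri_eq_max_min (t : ℝ) : tri t = max 0 (min t (2 - t)) := by
  unfold tri
  split_ifs with h1 h2
  · rw [min_eq_left (by linarith [h1.2]), max_eq_right h1.1.le]
  · rw [min_eq_right (by linarith [h2.1]), max_eq_right (by linarith [h2.2])]
  · push_neg at h1 h2
    rcases le_or_gt t 0 with h | h
    · rw [min_eq_left (by linarith), max_eq_left h]
    · have h1' := h1 h
      have h2' := h2 h1'
      rw [min_eq_right (by linarith), max_eq_left (by linarith)]

lemma tri_continuous : Continuous tri := by
  have : tri = fun t => max 0 (min t (2 - t)) := funext tri_eq_max_min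
  rw [this]; fun_prop

lemma tri_of_two_le {t : ℝ} (h : 2 ≤ t) : tri t = 0 := by
  rw [tri_eq_max_min, min_eq_right (by linarith), max_eq_left (by linarith)]

lemma tri_of_mem_right {t : ℝ} (h1 : 1 ≤ t) (h2 : t ≤ 2) : tri t = 2 - t := by
  rw [tri_eq_max_min, min_eq_right (by linarith), max_eq_right (by linarith)]

lemma tri_of_mem_left {t : ℝ} (h0 : 0 ≤ t) (h1 : t ≤ 1) : tri t = t := by
  rw [tri_eq_max_min, min_eq_left (by linarith), max_eq_right h0]

/-- Equation (26), first part: the boundary diagonal entry (η+2,η+2), in the case η > 1. -/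
theorem Aent_boundary_diag (η : ℕ) (hη : 2 ≤ η) (c : ℝ) (hc0 : 0 < c) (hc1 : c < 1) :
    Aent η c (η + 2) (η + 2) = (2 - (1 - c) ^ 3) / (3 * (η : ℝ)) := by
  have hN : (2 : ℝ) ≤ (η : ℝ) := by exact_mod_cast hη
  set N : ℝ := (η : ℝ) with hNdef
  unfold Aent
  set g : ℝ → ℝ := fun t => tri (N + 1 - c - t) * tri (N + 1 - c - t) with hg
  have hform : ∀ t : ℝ, ((η + 2 : ℕ) : ℝ) - 1 - t - c = N + 1 - c - t := by
    intro t; push_cast; ring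
  have hrw : (∫ t in (0:ℝ)..N, tri (((η + 2 : ℕ) : ℝ) - 1 - t - c) *
      tri (((η + 2 : ℕ) : ℝ) - 1 - t - c)) = ∫ t in (0:ℝ)..N, g t := by
    simp only [hform]
    rfl
  have hgcont : Continuous g := by
    apply Continuous.mul <;> exact tri_continuous.comp (by fun_prop)
  have hint : ∀ a b : ℝ, IntervalIntegrable g MeasureTheory.volume a b := fun a b =>
    hgcont.intervalIntegrable a b
  -- split points
  have hsplit1 : (∫ t in (0:ℝ)..N, g t) =
      (∫ t in (0:ℝ)..(N - 1 - c), g t) + ∫ t in (N - 1 - c)..N, g t :=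
    (intervalIntegral.integral_add_adjacent_intervals (hint _ _) (hint _ _)).symm
  have hsplit2 : (∫ t in (N - 1 - c)..N, g t) =
      (∫ t in (N - 1 - c)..(N - c), g t) + ∫ t in (N - c)..N, g t :=
    (intervalIntegral.integral_add_adjacent_intervals (hint _ _) (hint _ _)).symm
  have h1 : (∫ t in (0:ℝ)..(N - 1 - c), g t) = 0 := by
    have : (∫ t in (0:ℝ)..(N - 1 - c), g t) = ∫ t in (0:ℝ)..(N - 1 - c), (0:ℝ) := by
      apply intervalIntegral.integral_congr
      intro t ht
      rw [Set.uIcc_of_le (by linarith)] at ht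
      obtain ⟨ht1, ht2⟩ := ht
      have h2le : (2:ℝ) ≤ N + 1 - c - t := by linarith
      simp [hg, tri_of_two_le h2le]
    simp [this]
  have h2 : (∫ t in (N - 1 - c)..(N - c), g t) = 1 / 3 := by
    have heq : (∫ t in (N - 1 - c)..(N - c), g t) =
        ∫ t in (N - 1 - c)..(N - c), (fun u : ℝ => u ^ 2) (t - (N - 1 - c)) := by
      apply intervalIntegral.integral_congr
      intro t ht
      rw [Set.uIcc_of_le (by linarith)] at ht
      obtain ⟨ht1, ht2⟩ := ht
      have hs1 : (1:ℝ) ≤ N + 1 - c - t := by linarith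
      have hs2 : N + 1 - c - t ≤ 2 := by linarith
      simp only [hg, tri_of_mem_right hs1 hs2]
      ring
    rw [heq, intervalIntegral.integral_comp_sub_right (fun u : ℝ => u ^ 2) (N - 1 - c)]
    have e1 : N - 1 - c - (N - 1 - c) = 0 := by ring
    have e2 : N - c - (N - 1 - c) = 1 := by ring
    rw [e1, e2, integral_pow]
    norm_num
  have h3 : (∫ t in (N - c)..N, g t) = (1 - (1 - c) ^ 3) / 3 := by
    have heq : (∫ t in (N - c)..N, g t) =
        ∫ t in (N - c)..N, (fun u : ℝ => u ^ 2) (N + 1 - c - t) := by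
      apply intervalIntegral.integral_congr
      intro t ht
      rw [Set.uIcc_of_le (by linarith)] at ht
      obtain ⟨ht1, ht2⟩ := ht
      have hs0 : (0:ℝ) ≤ N + 1 - c - t := by linarith
      have hs1 : N + 1 - c - t ≤ 1 := by linarith
      simp only [hg, tri_of_mem_left hs0 hs1]
      ring
    rw [heq, intervalIntegral.integral_comp_sub_left (fun u : ℝ => u ^ 2) (N + 1 - c)]
    have e1 : N + 1 - c - N = 1 - c := by ring
    have e2 : N + 1 - c - (N - c) = 1 := by ring
    rw [e1, e2, integral_pow]
    norm_num
  rw [hrw, hsplit1, hsplit2, h1, h2, h3]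
  have hNne : N ≠ 0 := by linarith
  field_simp
  ring
end

section
/- Define the triangular function ∇ : ℝ → ℝ by ∇(t) = t for 0 < t ≤ 1, ∇(t) = 2 − t for 1 < t ≤ 2, and ∇(t) = 0 otherwise. For a positive integer η, a real number c with 0 < c < 1, and positive integers n, m, define A(n,m) := (1/η) ∫_0^η ∇(n − 1 − t − c) · ∇(m − 1 − t − c) dt. Then in the special case η = 1, A(3,3) = (1 + 3c − 3c²) / 3. (Equation (27): the (3,3) entry of the averaged timing-offset outer product in the special case η = 1, which differs from the formula valid for η > 1.) -/
/-- Equation (27): the (3,3) entry in the special case η = 1. -/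
theorem Aent_three_three_eta_one (c : ℝ) (hc0 : 0 < c) (hc1 : c < 1) :
    Aent 1 c 3 3 = (1 + 3 * c - 3 * c ^ 2) / 3 := by
  unfold Aent
  have hb : (0:ℝ) ≤ 1 - c := by linarith
  have hb1 : (1:ℝ) - c ≤ 1 := by linarith
  set f : ℝ → ℝ := fun t => tri ((3:ℕ) - 1 - t - c) * tri ((3:ℕ) - 1 - t - c) with hf
  have e1 : Set.EqOn f (fun t => (t + c) ^ 2) (Set.uIcc 0 (1 - c)) := by
    intro t ht
    rw [Set.uIcc_of_le hb] at ht
    obtain ⟨ht0, ht1⟩ := ht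
    have hx : ((3:ℕ):ℝ) - 1 - t - c = 2 - t - c := by push_cast; ring
    have h1 : tri (2 - t - c) = t + c := by
      unfold tri
      rcases eq_or_lt_of_le ht1 with h | h
      · have : 2 - t - c = 1 := by linarith
        rw [this]; norm_num; linarith
      · have h2 : ¬ (0 < 2 - t - c ∧ 2 - t - c ≤ 1) := by
          rintro ⟨_, h3⟩; linarith
        rw [if_neg h2, if_pos ⟨by linarith, by linarith⟩]; ring
    simp only [hf, hx, h1]; ring
  have e2 : Set.EqOn f (fun t => (2 - c - t) ^ 2) (Set.uIcc (1 - c) 1) := by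
    intro t ht
    rw [Set.uIcc_of_le hb1] at ht
    obtain ⟨ht0, ht1⟩ := ht
    have hx : ((3:ℕ):ℝ) - 1 - t - c = 2 - t - c := by push_cast; ring
    have h1 : tri (2 - t - c) = 2 - t - c := by
      unfold tri
      rw [if_pos ⟨by linarith, by linarith⟩]
    simp only [hf, hx, h1]; ring
  have i1 : IntervalIntegrable f MeasureTheory.volume 0 (1 - c) := by
    rw [intervalIntegrable_iff_integrableOn_Ioc_of_le hb]
    exact (((continuous_id.add continuous_const).pow 2).integrableOn_Ioc).congr_fun
      (fun t ht => (e1 (Set.Ioc_subset_Icc_self.trans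
        (by rw [Set.uIcc_of_le hb]) ht)).symm) measurableSet_Ioc
  have i2 : IntervalIntegrable f MeasureTheory.volume (1 - c) 1 := by
    rw [intervalIntegrable_iff_integrableOn_Ioc_of_le hb1]
    exact (((continuous_const.sub continuous_id).pow 2).integrableOn_Ioc).congr_fun
      (fun t ht => (e2 (Set.Ioc_subset_Icc_self.trans
        (by rw [Set.uIcc_of_le hb1]) ht)).symm) measurableSet_Ioc
  have hsplit : (∫ t in (0:ℝ)..1, f t)
      = (∫ t in (0:ℝ)..(1 - c), f t) + ∫ t in (1 - c)..1, f t :=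
    (intervalIntegral.integral_add_adjacent_intervals i1 i2).symm
  have hI1 : (∫ t in (0:ℝ)..(1 - c), f t) = (1 - c ^ 3) / 3 := by
    rw [intervalIntegral.integral_congr e1]
    have := intervalIntegral.integral_comp_add_right (a := (0:ℝ)) (b := 1 - c)
      (fun x => x ^ 2) c
    rw [this]
    rw [integral_pow]
    push_cast; ring
  have hI2 : (∫ t in (1 - c)..1, f t) = (1 - (1 - c) ^ 3) / 3 := by
    rw [intervalIntegral.integral_congr e2]
    have := intervalIntegral.integral_comp_sub_left (a := (1 - c:ℝ)) (b := 1)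
      (fun x => x ^ 2) (2 - c)
    rw [this]
    have h21 : (2:ℝ) - c - 1 = 1 - c := by ring
    have h22 : (2:ℝ) - c - (1 - c) = 1 := by ring
    rw [h21, h22, integral_pow]
    norm_num
  push_cast
  rw [show intervalIntegral f 0 1 MeasureTheory.volume = (∫ t in (0:ℝ)..1, f t) from rfl,
    hsplit, hI1, hI2]
  ring
end
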